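/- Let M be a module over a ring R such that every submodule N of M can be written as N = X + A for some cyclic submodule X of M and some submodule A small in M. Then M is principally Goldie*-lifting if and only if M is Goldie*-lifting. -/

import Mathlib

/-- A submodule `K` is small (superfluous) in `M`:
`K + N = M` implies `N = M` for all submodules `N`. -/
def IsSmallSub {R M : Type*} [Ring R] [AddCommGroup M] [Module R M]
    (K : Submodule R M) : Prop :=
  ∀ N : Submodule R M, K ⊔ N = ⊤ → N = ⊤

/-- `K` is small in the submodule `N` (where `K ≤ N`):
for every submodule `L ≤ N`, `K + L = N` implies `L = N`. -/
def IsSmallIn {R M : Type*} [Ring R] [AddCommGroup M] [Module R M]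
    (K N : Submodule R M) : Prop :=
  ∀ L : Submodule R M, L ≤ N → K ⊔ L = N → L = N

/-- The β* relation: `X β* Y` iff `(X+Y)/X ≪ M/X` and `(X+Y)/Y ≪ M/Y`. -/
def BetaStar {R M : Type*} [Ring R] [AddCommGroup M] [Module R M]
    (X Y : Submodule R M) : Prop :=
  IsSmallSub ((X ⊔ Y).map X.mkQ) ∧ IsSmallSub ((X ⊔ Y).map Y.mkQ)

/-- A submodule is cyclic if it is generated by a single element. -/
def IsCyclicSub {R M : Type*} [Ring R] [AddCommGroup M] [Module R M]
    (X : Submodule R M) : Prop :=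
  ∃ m : M, X = Submodule.span R {m}

/-- A submodule is a direct summand if it has a complement. -/
def IsDirectSummand {R M : Type*} [Ring R] [AddCommGroup M] [Module R M]
    (D : Submodule R M) : Prop :=
  ∃ D' : Submodule R M, IsCompl D D'

/-- `M` is principally Goldie*-lifting: every cyclic submodule is β* equivalent
to a direct summand. -/
def PrinGStarLifting (R M : Type*) [Ring R] [AddCommGroup M] [Module R M] : Prop :=
  ∀ X : Submodule R M, IsCyclicSub X → ∃ D : Submodule R M, IsDirectSummand D ∧ BetaStar X D

/-- The radical of `M`: the intersection of all maximal proper submodules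
(equal to `M` if there are none). -/
def RadSub (R M : Type*) [Ring R] [AddCommGroup M] [Module R M] : Submodule R M :=
  sInf {N : Submodule R M | IsCoatom N}

/-!
Smallness of `K/X` in `M/X` says that `X + K + L = M` forces `X + L = M`, so `X β* D` only sees
sums `X + D + L = M`. Adding a small submodule `A` to `X` does not change which such sums equal
`M`; hence if `N = X + A` with `X` cyclic and `A ≪ M`, the summand `D` with `X β* D` also satisfies
`N β* D`.
-/

section

open Submodule

variable {R M : Type*} [Ring R] [AddCommGroup M] [Module R M]

theorem isSmallSub_map_mkQ_iff (X K : Submodule R M) :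
    IsSmallSub (K.map X.mkQ) ↔ ∀ L : Submodule R M, X ⊔ K ⊔ L = ⊤ → X ⊔ L = ⊤ := by
  constructor
  · intro hK L hL
    rw [← map_mkQ_eq_top]
    apply hK
    rw [← Submodule.map_sup, map_mkQ_eq_top, ← sup_assoc, hL]
  · intro hK N hN
    rw [← map_comap_eq_of_surjective X.mkQ_surjective N] at hN ⊢
    rw [← Submodule.map_sup, map_mkQ_eq_top, ← sup_assoc] at hN
    exact (map_mkQ_eq_top _ _).mpr (hK _ hN)

theorem betaStar_iff (X Y : Submodule R M) :
    BetaStar X Y ↔ (∀ L : Submodule R M, X ⊔ Y ⊔ L = ⊤ → X ⊔ L = ⊤) ∧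
      ∀ L : Submodule R M, X ⊔ Y ⊔ L = ⊤ → Y ⊔ L = ⊤ := by
  rw [BetaStar, isSmallSub_map_mkQ_iff, isSmallSub_map_mkQ_iff, sup_left_idem,
    sup_left_comm, sup_idem]

theorem BetaStar.sup_left_of_isSmallSub {X D A : Submodule R M} (hXD : BetaStar X D)
    (hA : IsSmallSub A) : BetaStar (X ⊔ A) D := by
  obtain ⟨hX, hD⟩ := (betaStar_iff X D).mp hXD
  refine (betaStar_iff _ D).mpr ⟨fun L hL ↦ ?_, fun L hL ↦ hD L (hA _ ?_)⟩
  · rw [sup_assoc]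
    exact hX _ (by rw [← hL]; ac_rfl)
  · rw [← hL]; ac_rfl

end

/-- If every submodule of `M` is the sum of a cyclic submodule
and a small submodule, then `M` is principally Goldie*-lifting iff it is
Goldie*-lifting. -/
theorem stmt_19 {R M : Type*} [Ring R] [AddCommGroup M] [Module R M]
    (h : ∀ N : Submodule R M, ∃ X A : Submodule R M,
      IsCyclicSub X ∧ IsSmallSub A ∧ N = X ⊔ A) :
    PrinGStarLifting R M ↔
      ∀ N : Submodule R M, ∃ D : Submodule R M, IsDirectSummand D ∧ BetaStar N D := by
  constructor
  · intro hprin N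
    obtain ⟨X, A, hX, hA, rfl⟩ := h N
    obtain ⟨D, hD, hXD⟩ := hprin X hX
    exact ⟨D, hD, hXD.sup_left_of_isSmallSub hA⟩
  · exact fun hlift X _ ↦ hlift X
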